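/- Let ρ : ℝ^p → [0, ∞) be continuous with ρ(y) → 0 as ‖y‖ → ∞, set D(α) = {y ∈ ℝ^p : ρ(y) ≥ α} and D_0(α) = {y ∈ ℝ^p : ρ(y) > α}. Then for every α with 0 < α < sup_y ρ(y), lim_{δ → 0⁺} d_H(D(α + δ), D(α)) = d_H(closure(D_0(α)), D(α)); in particular, if the closure of D_0(α) equals D(α), then d_H(D(α + δ), D(α)) → 0 as δ → 0⁺. -/

import Mathlib

open MeasureTheory Filter Metric

/-- The α-trimmed region `D(α) = {y : ρ(y) ≥ α}` of a depth function `ρ`. -/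
def Dset {E : Type*} (ρ : E → ℝ) (a : ℝ) : Set E := {y | a ≤ ρ y}

/-- `α(r) = sup {α : μ(D(α)) ≥ r}`, the depth level of the 100r% central region. -/
noncomputable def alphaLevel {E : Type*} [MeasurableSpace E]
    (μ : Measure E) (ρ : E → ℝ) (r : ℝ) : ℝ :=
  sSup {a : ℝ | ENNReal.ofReal r ≤ μ (Dset ρ a)}

/-!
With `K = D(α)` compact and `U = D₀(α)`, every `D(α + δ)` with `δ > 0` lies between a
nonempty subset of `U` and `K`. For sets `A ⊆ B ⊆ K` the distance `d_H(B, K)` is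
`sup_{x ∈ K} infDist x B`, which decreases as `B` grows; this gives
`d_H(U, K) ≤ d_H(D(α + δ), K)`. Conversely, `K` is covered by finitely many balls of radius
`d_H(U, K) + ε` centred in `U`; the finitely many centres satisfy `ρ > α + δ` for small `δ`,
so `d_H(D(α + δ), K) ≤ d_H(U, K) + ε`. Finally `d_H(closure U, K) = d_H(U, K)`.
-/

open Set Topology

section HausdorffDist

variable {E : Type*} [PseudoMetricSpace E]

theorem hausdorffDist_le_of_subset {A K : Set E} {r : ℝ} (hr : 0 ≤ r) (hAK : A ⊆ K)
    (h : ∀ x ∈ K, infDist x A ≤ r) : hausdorffDist A K ≤ r :=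
  hausdorffDist_le_of_infDist hr (fun x hx => by rw [infDist_zero_of_mem (hAK hx)]; exact hr) h

theorem hausdorffDist_anti_of_subset {A B K : Set E} (hA : A.Nonempty) (hAB : A ⊆ B)
    (hBK : B ⊆ K) (hK : Bornology.IsBounded K) :
    hausdorffDist B K ≤ hausdorffDist A K := by
  refine hausdorffDist_le_of_subset hausdorffDist_nonneg hBK fun x hx => ?_
  have hfin : hausdorffEDist K A ≠ ⊤ :=
    hausdorffEDist_ne_top_of_nonempty_of_bounded ⟨x, hx⟩ hA hK (hK.subset (hAB.trans hBK))
  calc infDist x B ≤ infDist x A := infDist_le_infDist_of_subset hAB hA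
    _ ≤ hausdorffDist K A := infDist_le_hausdorffDist_of_mem hx hfin
    _ = hausdorffDist A K := hausdorffDist_comm

end HausdorffDist

section LevelSets

variable {E : Type*} {ρ : E → ℝ} {α : ℝ}

theorem setOf_lt_subset_Dset : {y | α < ρ y} ⊆ Dset ρ α :=
  fun _ hy => le_of_lt (show α < ρ _ from hy)

theorem Dset_add_subset_setOf_lt {δ : ℝ} (hδ : 0 < δ) : Dset ρ (α + δ) ⊆ {y | α < ρ y} :=
  fun _ hy => (lt_add_of_pos_right α hδ).trans_le hy

theorem eventually_subset_Dset_add {T : Set E} (hT : T.Finite) (hTα : T ⊆ {y | α < ρ y}) :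
    ∀ᶠ δ in 𝓝[>] (0 : ℝ), T ⊆ Dset ρ (α + δ) := by
  refine hT.eventually_all.2 fun s hs => ?_
  filter_upwards [Ioo_mem_nhdsGT (sub_pos.2 (hTα hs))] with δ hδ
  exact show α + δ ≤ ρ s by linarith [hδ.2]

variable [PseudoMetricSpace E]

theorem eventually_le_hausdorffDist_Dset_add (hK : Bornology.IsBounded (Dset ρ α))
    {y₀ : E} (hy₀ : α < ρ y₀) :
    ∀ᶠ δ in 𝓝[>] (0 : ℝ), hausdorffDist {y | α < ρ y} (Dset ρ α) ≤
      hausdorffDist (Dset ρ (α + δ)) (Dset ρ α) := by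
  filter_upwards [eventually_subset_Dset_add (finite_singleton y₀) (singleton_subset_iff.2 hy₀),
    self_mem_nhdsWithin] with δ hy₀δ hδ
  exact hausdorffDist_anti_of_subset (singleton_nonempty y₀ |>.mono hy₀δ)
    (Dset_add_subset_setOf_lt hδ) setOf_lt_subset_Dset hK

theorem eventually_hausdorffDist_Dset_add_le (hK : IsCompact (Dset ρ α)) {y₀ : E}
    (hy₀ : α < ρ y₀) {ε : ℝ} (hε : 0 < ε) :
    ∀ᶠ δ in 𝓝[>] (0 : ℝ), hausdorffDist (Dset ρ (α + δ)) (Dset ρ α) ≤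
      hausdorffDist {y | α < ρ y} (Dset ρ α) + ε := by
  set L := hausdorffDist {y | α < ρ y} (Dset ρ α)
  have hcov : Dset ρ α ⊆ ⋃ s ∈ {y | α < ρ y}, ball s (L + ε) := by
    intro x hx
    have hfin : hausdorffEDist (Dset ρ α) {y | α < ρ y} ≠ ⊤ :=
      hausdorffEDist_ne_top_of_nonempty_of_bounded ⟨x, hx⟩ ⟨y₀, hy₀⟩ hK.isBounded
        (hK.isBounded.subset setOf_lt_subset_Dset)
    have hxL : infDist x {y | α < ρ y} < L + ε := by
      have := infDist_le_hausdorffDist_of_mem hx hfin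
      rw [hausdorffDist_comm] at this
      linarith
    obtain ⟨s, hs, hxs⟩ := (infDist_lt_iff ⟨y₀, hy₀⟩).1 hxL
    exact mem_biUnion hs hxs
  obtain ⟨T, hTα, hT, hTcov⟩ := hK.elim_finite_subcover_image (fun _ _ => isOpen_ball) hcov
  filter_upwards [eventually_subset_Dset_add hT hTα, self_mem_nhdsWithin] with δ hTδ hδ
  refine hausdorffDist_le_of_subset (hausdorffDist_nonneg.trans (le_add_of_nonneg_right hε.le)) ((Dset_add_subset_setOf_lt hδ).trans
    setOf_lt_subset_Dset) fun x hx => ?_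
  obtain ⟨s, hs, hxs⟩ := mem_iUnion₂.1 (hTcov hx)
  exact (infDist_le_dist_of_mem (hTδ hs)).trans (mem_ball.1 hxs).le

theorem tendsto_hausdorffDist_Dset_add (hK : IsCompact (Dset ρ α)) {y₀ : E} (hy₀ : α < ρ y₀) :
    Tendsto (fun δ => hausdorffDist (Dset ρ (α + δ)) (Dset ρ α)) (𝓝[>] 0)
      (𝓝 (hausdorffDist (closure {y | α < ρ y}) (Dset ρ α))) := by
  rw [hausdorffDist_closure₁]
  refine tendsto_order.2 ⟨fun a ha => ?_, fun a ha => ?_⟩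
  · filter_upwards [eventually_le_hausdorffDist_Dset_add hK.isBounded hy₀] with δ hδ
    exact ha.trans_le hδ
  · filter_upwards [eventually_hausdorffDist_Dset_add_le hK hy₀ (half_pos (sub_pos.2 ha))]
      with δ hδ
    linarith

end LevelSets

theorem isCompact_Dset {E : Type*} [PseudoMetricSpace E] [ProperSpace E] {ρ : E → ℝ}
    (hρ : Continuous ρ) (hρ_lim : Tendsto ρ (Bornology.cobounded E) (𝓝 0)) {α : ℝ}
    (hα : 0 < α) : IsCompact (Dset ρ α) := by
  refine isCompact_of_isClosed_isBounded (isClosed_le continuous_const hρ) ?_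
  rw [Bornology.isBounded_def]
  filter_upwards [hρ_lim (Iio_mem_nhds hα)] with y hy
  exact not_le.2 (show ρ y < α from hy)

theorem stmt12_general
    {p : ℕ}
    (ρ : EuclideanSpace ℝ (Fin p) → ℝ) (hρ_cont : Continuous ρ)
    (hρ_lim : Tendsto ρ (comap (fun y : EuclideanSpace ℝ (Fin p) => ‖y‖) atTop) (nhds 0))
    (α : ℝ) (hα_pos : 0 < α) (hα_lt : α < ⨆ y, ρ y) :
    Tendsto (fun δ : ℝ => hausdorffDist (Dset ρ (α + δ)) (Dset ρ α))
      (nhdsWithin 0 (Set.Ioi 0))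
      (nhds (hausdorffDist (closure {y | α < ρ y}) (Dset ρ α))) ∧
    (closure {y : EuclideanSpace ℝ (Fin p) | α < ρ y} = Dset ρ α →
      Tendsto (fun δ : ℝ => hausdorffDist (Dset ρ (α + δ)) (Dset ρ α))
        (nhdsWithin 0 (Set.Ioi 0)) (nhds 0)) := by
  rw [comap_norm_atTop] at hρ_lim
  obtain ⟨y₀, hy₀⟩ := exists_lt_of_lt_ciSup hα_lt
  have hlim := tendsto_hausdorffDist_Dset_add (isCompact_Dset hρ_cont hρ_lim hα_pos) hy₀
  refine ⟨hlim, fun hcl => ?_⟩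
  rwa [hcl, hausdorffDist_self_zero] at hlim

theorem stmt12
    {p : ℕ} (hp : 1 ≤ p)
    (ρ : EuclideanSpace ℝ (Fin p) → ℝ) (hρ_cont : Continuous ρ)
    (hρ_nonneg : ∀ y, 0 ≤ ρ y)
    (hρ_lim : Tendsto ρ (comap (fun y : EuclideanSpace ℝ (Fin p) => ‖y‖) atTop) (nhds 0))
    (α : ℝ) (hα_pos : 0 < α) (hα_lt : α < ⨆ y, ρ y) :
    Tendsto (fun δ : ℝ => hausdorffDist (Dset ρ (α + δ)) (Dset ρ α))
      (nhdsWithin 0 (Set.Ioi 0))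
      (nhds (hausdorffDist (closure {y | α < ρ y}) (Dset ρ α))) ∧
    (closure {y : EuclideanSpace ℝ (Fin p) | α < ρ y} = Dset ρ α →
      Tendsto (fun δ : ℝ => hausdorffDist (Dset ρ (α + δ)) (Dset ρ α))
        (nhdsWithin 0 (Set.Ioi 0)) (nhds 0)) :=
  stmt12_general ρ hρ_cont hρ_lim α hα_pos hα_lt
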